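/- If X₁ ≥ X₂ almost surely and P(X₁ > X₂) > 0, then the quantile functions satisfy Q_{X₁}(p) ≥ Q_{X₂}(p) for all p ∈ (0,1), and there exists a nonempty open interval (a,b) ⊂ (0,1) on which Q_{X₁}(p) > Q_{X₂}(p). -/

import Mathlib

open MeasureTheory Set Filter Topology

noncomputable def quantile {Ω : Type*} [MeasurableSpace Ω] (P : Measure Ω) (X : Ω → ℝ)
    (p : ℝ) : ℝ :=
  sInf {z : ℝ | p < (P {ω | X ω ≤ z}).toReal}

/-!
The quantile of `X` is the generalized inverse of the distribution function
`F_X z = P(X ≤ z)`, and `X₂ ≤ X₁` a.s. gives `F_{X₁} ≤ F_{X₂}`, hence the first claim.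
For the strict one, pick a rational `q` with `P(X₂ ≤ q < X₁) > 0`, so that
`F_{X₁} q < F_{X₂} q`. For `p` strictly between these values, `p < F_{X₂} q` puts
`Q_{X₂}(p) ≤ q`, while `F_{X₁} q < p` and right continuity of `F_{X₁}` force `Q_{X₁}(p) > q`.
-/

open ProbabilityTheory

section cdf

variable {μ ν : Measure ℝ} {p z : ℝ}

lemma nonempty_setOf_lt_cdf (hp : p < 1) : {z | p < cdf μ z}.Nonempty :=
  ((tendsto_cdf_atTop μ).eventually_const_lt hp).exists

lemma bddBelow_setOf_lt_cdf (hp : 0 < p) : BddBelow {z | p < cdf μ z} := by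
  obtain ⟨z₀, hz₀⟩ := ((tendsto_cdf_atBot μ).eventually_lt_const hp).exists
  refine ⟨z₀, fun z hz => ?_⟩
  by_contra! hz_lt
  exact (monotone_cdf μ hz_lt.le).not_gt (hz₀.trans hz)

lemma sInf_setOf_lt_cdf_le (hp : 0 < p) (hz : p < cdf μ z) : sInf {z | p < cdf μ z} ≤ z :=
  csInf_le (bddBelow_setOf_lt_cdf hp) hz

lemma lt_sInf_setOf_lt_cdf (hp : p < 1) (hz : cdf μ z < p) : z < sInf {z | p < cdf μ z} := by
  obtain ⟨x, hx_lt, hzx⟩ : ∃ x, cdf μ x < p ∧ z < x :=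
    ((((cdf μ).right_continuous z).eventually_lt_const hz).filter_mono
      (nhdsWithin_mono z Ioi_subset_Ici_self) |>.and self_mem_nhdsWithin).exists
  refine hzx.trans_le (le_csInf (nonempty_setOf_lt_cdf hp) fun w hw => ?_)
  by_contra! hwx
  exact (monotone_cdf μ hwx.le).not_gt (hx_lt.trans hw)

lemma sInf_setOf_lt_cdf_anti (h : ∀ z, cdf μ z ≤ cdf ν z) (hp : p ∈ Ioo 0 1) :
    sInf {z | p < cdf ν z} ≤ sInf {z | p < cdf μ z} :=
  csInf_le_csInf (bddBelow_setOf_lt_cdf hp.1) (nonempty_setOf_lt_cdf hp.2)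
    fun z hz => hz.trans_le (h z)

end cdf

section

variable {Ω : Type*} [MeasurableSpace Ω] {P : Measure Ω} {X X₁ X₂ : Ω → ℝ}

lemma exists_measure_setOf_le_lt_pos (h : 0 < P {ω | X₂ ω < X₁ ω}) :
    ∃ q : ℚ, 0 < P {ω | X₂ ω ≤ q ∧ (q : ℝ) < X₁ ω} := by
  have hcover : {ω | X₂ ω < X₁ ω} ⊆ ⋃ q : ℚ, {ω | X₂ ω ≤ q ∧ (q : ℝ) < X₁ ω} := fun ω hω =>
    let ⟨q, hq₂, hq₁⟩ := exists_rat_btwn hω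
    mem_iUnion.2 ⟨q, hq₂.le, hq₁⟩
  exact exists_measure_pos_of_not_measure_iUnion_null
    (h.trans_le (measure_mono hcover)).ne'

variable [IsProbabilityMeasure P]

lemma cdf_map_eq (hX : Measurable X) (z : ℝ) : cdf (P.map X) z = P.real {ω | X ω ≤ z} := by
  have := Measure.isProbabilityMeasure_map (μ := P) hX.aemeasurable
  rw [cdf_eq_real, map_measureReal_apply hX measurableSet_Iic]
  rfl

lemma quantile_eq_sInf_cdf_map (hX : Measurable X) (p : ℝ) :
    quantile P X p = sInf {z | p < cdf (P.map X) z} := by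
  simp only [quantile, cdf_map_eq hX, measureReal_def]

lemma cdf_map_add_measureReal_le (hX₁ : Measurable X₁) (hX₂ : Measurable X₂)
    (hle : ∀ᵐ ω ∂P, X₂ ω ≤ X₁ ω) (z : ℝ) :
    cdf (P.map X₁) z + P.real {ω | X₂ ω ≤ z ∧ z < X₁ ω} ≤ cdf (P.map X₂) z := by
  have hdisj : Disjoint {ω | X₁ ω ≤ z} {ω | X₂ ω ≤ z ∧ z < X₁ ω} :=
    disjoint_left.2 fun ω h₁ h₂ => h₂.2.not_ge h₁
  have hsub : P ({ω | X₁ ω ≤ z} ∪ {ω | X₂ ω ≤ z ∧ z < X₁ ω}) ≤ P {ω | X₂ ω ≤ z} := by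
    refine measure_mono_ae ?_
    filter_upwards [hle] with ω hω hmem
    rcases hmem with h | h
    · exact hω.trans h
    · exact h.1
  rw [cdf_map_eq hX₁, cdf_map_eq hX₂, ← measureReal_union hdisj
    ((hX₂ measurableSet_Iic).inter (hX₁ measurableSet_Ioi))]
  exact ENNReal.toReal_mono (measure_ne_top _ _) hsub

end

/-- If `X₁ ≥ X₂` a.s. and `P(X₁ > X₂) > 0` then `Q_{X₁} ≥ Q_{X₂}` on `(0,1)`, with strict
inequality on some nonempty open subinterval `(a,b) ⊆ (0,1)`. -/
theorem quantile_mono_of_ae_le {Ω : Type*} [MeasurableSpace Ω] (P : Measure Ω)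
    [IsProbabilityMeasure P] (X₁ X₂ : Ω → ℝ) (hX₁ : Measurable X₁) (hX₂ : Measurable X₂)
    (hle : ∀ᵐ ω ∂P, X₂ ω ≤ X₁ ω) (hlt : 0 < P {ω | X₂ ω < X₁ ω}) :
    (∀ p ∈ Set.Ioo (0:ℝ) 1, quantile P X₂ p ≤ quantile P X₁ p) ∧
    (∃ a b : ℝ, a < b ∧ Set.Ioo a b ⊆ Set.Ioo (0:ℝ) 1 ∧
      ∀ p ∈ Set.Ioo a b, quantile P X₂ p < quantile P X₁ p) := by
  have hgap := cdf_map_add_measureReal_le hX₁ hX₂ hle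
  simp only [quantile_eq_sInf_cdf_map hX₁, quantile_eq_sInf_cdf_map hX₂]
  refine ⟨fun p hp => sInf_setOf_lt_cdf_anti
    (fun z => le_of_add_le_of_nonneg_left (hgap z) measureReal_nonneg) hp, ?_⟩
  obtain ⟨q, hq⟩ := exists_measure_setOf_le_lt_pos hlt
  have hq_gap : cdf (P.map X₁) q < cdf (P.map X₂) q :=
    (lt_add_of_pos_right _ (ENNReal.toReal_pos hq.ne' (measure_ne_top _ _))).trans_le (hgap q)
  have hIoo : Ioo (cdf (P.map X₁) q) (cdf (P.map X₂) q) ⊆ Ioo 0 1 := fun p hp =>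
    ⟨(cdf_nonneg _ _).trans_lt hp.1, hp.2.trans_le (cdf_le_one _ _)⟩
  refine ⟨_, _, hq_gap, hIoo, fun p hp => ?_⟩
  exact (sInf_setOf_lt_cdf_le (hIoo hp).1 hp.2).trans_lt (lt_sInf_setOf_lt_cdf (hIoo hp).2 hp.1)
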